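/- arXiv:2602.18427 — 2 statements merged into one kernel-verified Lean document; each statement's English description precedes it below -/
import Mathlib

section
/- Let n ≥ 1 be odd and set k = ⌊n/2⌋. For every n×n vertically symmetric alternating sign matrix X (an ASM with x_{i,j} = x_{i,n+1−j} for all i,j), the middle-column entries satisfy x_{i,k+1} = (−1)^{i+1} for every i ∈ {1,…,n}. -/
/-- An `n × n` alternating sign matrix: entries in `{-1, 0, 1}`, all row- and
column-prefix sums lie in `{0, 1}`, and all full row and column sums equal `1`. -/
def IsASM (n : ℕ) (X : Fin n → Fin n → ℝ) : Prop :=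
  (∀ i j, X i j = -1 ∨ X i j = 0 ∨ X i j = 1) ∧
  (∀ i j, (∑ j' ∈ Finset.Iic j, X i j') = 0 ∨ (∑ j' ∈ Finset.Iic j, X i j') = 1) ∧
  (∀ i j, (∑ i' ∈ Finset.Iic i, X i' j) = 0 ∨ (∑ i' ∈ Finset.Iic i, X i' j) = 1) ∧
  (∀ i, (∑ j, X i j) = 1) ∧
  (∀ j, (∑ i, X i j) = 1)

lemma VSASM_aux (n : ℕ) (X : Fin n → Fin n → ℝ) (hX : IsASM n X)
    (hsym : ∀ i j, X i j = X i j.rev) (k : Fin n) (hk : 2 * (k : ℕ) + 1 = n)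
    (i : Fin n) : X i k = (-1) ^ (i : ℕ) := by
  obtain ⟨hent, hrow, hcol, hrowsum, hcolsum⟩ := hX
  -- Step 1: every entry in the middle column is ±1
  have hpm : ∀ i : Fin n, X i k = -1 ∨ X i k = 1 := by
    intro i
    have hmirror : ∑ j ∈ Finset.Ioi k, X i j = ∑ j ∈ Finset.Iio k, X i j := by
      apply Finset.sum_nbij' (i := Fin.rev) (j := Fin.rev)
      · intro a ha
        rw [Finset.mem_Ioi] at ha
        rw [Finset.mem_Iio, Fin.lt_def, Fin.val_rev]
        rw [Fin.lt_def] at ha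
        omega
      · intro a ha
        rw [Finset.mem_Iio] at ha
        rw [Finset.mem_Ioi, Fin.lt_def, Fin.val_rev]
        rw [Fin.lt_def] at ha
        omega
      · intro a _; exact Fin.rev_rev a
      · intro a _; exact Fin.rev_rev a
      · intro a _; rw [← hsym]
    have huniv : (Finset.univ : Finset (Fin n)) =
        (Finset.Iio k ∪ {k}) ∪ Finset.Ioi k := by
      ext x
      simp only [Finset.mem_univ, Finset.mem_union, Finset.mem_Iio, Finset.mem_Ioi,
        Finset.mem_singleton, Fin.lt_def, Fin.ext_iff, true_iff]
      omega
    have hd1 : Disjoint (Finset.Iio k) ({k} : Finset (Fin n)) := by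
      simp [Finset.disjoint_singleton_right]
    have hd2 : Disjoint (Finset.Iio k ∪ {k}) (Finset.Ioi k) := by
      rw [Finset.disjoint_union_left]
      constructor
      · rw [Finset.disjoint_left]
        intro a ha hb
        rw [Finset.mem_Iio] at ha; rw [Finset.mem_Ioi] at hb
        exact absurd (ha.trans hb) (lt_irrefl a)
      · simp [Finset.disjoint_singleton_left]
    have hsplit : (∑ j, X i j) =
        ((∑ j ∈ Finset.Iio k, X i j) + X i k) + ∑ j ∈ Finset.Ioi k, X i j := by
      rw [huniv, Finset.sum_union hd2, Finset.sum_union hd1, Finset.sum_singleton]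
    have hA : (∑ j ∈ Finset.Iio k, X i j) = 0 ∨ (∑ j ∈ Finset.Iio k, X i j) = 1 := by
      rcases Nat.eq_zero_or_pos (k : ℕ) with h0 | hpos
      · left
        have he : Finset.Iio k = ∅ := by
          rw [Finset.eq_empty_iff_forall_notMem]
          intro x hx
          rw [Finset.mem_Iio, Fin.lt_def, h0] at hx
          omega
        simp [he]
      · have hlt : (k : ℕ) - 1 < n := by omega
        have he : Finset.Iio k = Finset.Iic (⟨(k : ℕ) - 1, hlt⟩ : Fin n) := by
          ext x
          rw [Finset.mem_Iio, Finset.mem_Iic, Fin.lt_def, Fin.le_def]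
          simp only [Fin.val_mk]
          omega
        rw [he]
        exact hrow i _
    rw [hrowsum i, hmirror] at hsplit
    rcases hA with h | h <;> rw [h] at hsplit
    · right; linarith
    · left; linarith
  -- Step 2: alternation down the column
  have key : ∀ v : ℕ, ∀ h : v < n,
      ((∑ i' ∈ Finset.Iic (⟨v, h⟩ : Fin n), X i' k) = if Even v then 1 else 0) ∧
      X ⟨v, h⟩ k = (-1) ^ v := by
    intro v
    induction v with
    | zero =>
      intro h
      have h0 : Finset.Iic (⟨0, h⟩ : Fin n) = {⟨0, h⟩} := by
        ext x
        rw [Finset.mem_Iic, Finset.mem_singleton, Fin.le_def, Fin.ext_iff]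
        simp only [Fin.val_mk]
        omega
      have hc := hcol ⟨0, h⟩ k
      rw [h0, Finset.sum_singleton] at hc ⊢
      rcases hpm ⟨0, h⟩ with he | he <;> rw [he] at hc ⊢
      · exfalso; rcases hc with hc | hc <;> norm_num at hc
      · norm_num
    | succ v ih =>
      intro h
      have hv : v < n := by omega
      obtain ⟨ihsum, _⟩ := ih hv
      have hins : Finset.Iic (⟨v + 1, h⟩ : Fin n) =
          insert ⟨v + 1, h⟩ (Finset.Iic (⟨v, hv⟩ : Fin n)) := by
        ext x
        rw [Finset.mem_Iic, Finset.mem_insert, Finset.mem_Iic, Fin.le_def, Fin.le_def,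
          Fin.ext_iff]
        simp only [Fin.val_mk]
        omega
      have hnotmem : (⟨v + 1, h⟩ : Fin n) ∉ Finset.Iic (⟨v, hv⟩ : Fin n) := by
        rw [Finset.mem_Iic, Fin.le_def]
        simp only [Fin.val_mk]
        omega
      have hsum : (∑ i' ∈ Finset.Iic (⟨v + 1, h⟩ : Fin n), X i' k) =
          X ⟨v + 1, h⟩ k + ∑ i' ∈ Finset.Iic (⟨v, hv⟩ : Fin n), X i' k := by
        rw [hins, Finset.sum_insert hnotmem]
      have hc := hcol ⟨v + 1, h⟩ k
      rw [hsum, ihsum] at hc ⊢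
      rcases Nat.even_or_odd v with hp | hp
      · rw [if_pos hp] at hc ⊢
        rcases hpm ⟨v + 1, h⟩ with he | he <;> rw [he] at hc ⊢
        · constructor
          · rw [if_neg (by simp [Nat.even_add_one, hp])]; ring
          · rw [Odd.neg_one_pow (hp.add_one)]
        · exfalso; rcases hc with hc | hc <;> norm_num at hc
      · rw [if_neg (Nat.not_even_iff_odd.mpr hp)] at hc ⊢
        rcases hpm ⟨v + 1, h⟩ with he | he <;> rw [he] at hc ⊢
        · exfalso; rcases hc with hc | hc <;> norm_num at hc
        · constructor
          · rw [if_pos (hp.add_one)]; ring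
          · rw [Even.neg_one_pow (hp.add_one)]
  have := (key i.val i.isLt).2
  simpa using this

/-- The middle column of a vertically symmetric ASM of odd order `n` alternates:
its entry in row `i` (one-based) is `(-1)^(i+1)`, i.e. `(-1)^i` zero-based. -/
theorem VSASM_middle_column (n : ℕ) (hn : 1 ≤ n) (hodd : Odd n)
    (X : Fin n → Fin n → ℝ) (hX : IsASM n X)
    (hsym : ∀ i j, X i j = X i j.rev) (i : Fin n) :
    X i ⟨n / 2, Nat.div_lt_self (by omega) (by omega)⟩ = (-1) ^ (i : ℕ) := by
  obtain ⟨m, hm⟩ := hodd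
  exact VSASM_aux n X hX hsym _ (by simp only [Fin.val_mk]; omega) i
end

section
/- Let n ≥ 1 be odd and set k = ⌊n/2⌋. The convex hull in ℝ^{k×k} of the set { (x_{i,j})_{i,j∈{1,…,k}} : X is an n×n VHSASM } (the upper-left k×k blocks of VHSASMs) equals the set of Y ∈ ℝ^{k×k} satisfying: (i) 0 ≤ ∑_{j'=1}^{j} y_{i,j'} ≤ 1 for all i ∈ {1,…,k} and j ∈ {1,…,k−1}; (ii) 0 ≤ ∑_{i'=1}^{i} y_{i',j} ≤ 1 for all i ∈ {1,…,k−1} and j ∈ {1,…,k}; (iii) ∑_{j=1}^{k} y_{i,j} = 1 if i is even and = 0 if i is odd, for all i ∈ {1,…,k}; and (iv) ∑_{i=1}^{k} y_{i,j} = 1 if j is even and = 0 if j is odd, for all j ∈ {1,…,k}. -/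
set_option linter.unusedSectionVars false
set_option linter.unusedVariables false

namespace VHS

/-- sum over `Finset.Iic j` in `Fin m` of a function of the value. -/
lemma sum_Iic_fin {m : ℕ} (j : Fin m) (g : ℕ → ℝ) :
    ∑ x ∈ Finset.Iic j, g x.val = ∑ x ∈ Finset.range (j.val+1), g x := by
  refine Finset.sum_bij' (fun (a : Fin m) _ => (a : ℕ))
    (fun a ha => (⟨a, by simp only [Finset.mem_range] at ha; omega⟩ : Fin m))
    ?_ ?_ ?_ ?_ ?_
  · intro a ha
    simp only [Finset.mem_Iic, Fin.le_def] at ha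
    simp only [Finset.mem_range]
    omega
  · intro a ha
    simp only [Finset.mem_range] at ha
    simp only [Finset.mem_Iic, Fin.le_def]
    omega
  · intro a ha; rfl
  · intro a ha; rfl
  · intro a ha; rfl

/-- The extension of a core corner function to the full corner function. -/
def Dx (k : ℕ) (E : ℕ → ℕ → ℤ) : ℕ → ℕ → ℤ := fun a b =>
  if a ≤ k then (if b ≤ k then E a b else (a : ℤ) - E a (2*k+1 - b))
  else (if b ≤ k then (b : ℤ) - E (2*k+1-a) b
        else (a : ℤ) + (b : ℤ) - (2*k+1 : ℤ) + E (2*k+1-a) (2*k+1-b))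

section core
variable (k : ℕ) (E : ℕ → ℕ → ℤ)
  (hE0 : ∀ b, E 0 b = 0) (hE0' : ∀ a, E a 0 = 0)
  (hEr : ∀ a, a ≤ k → E a k = (a/2 : ℕ)) (hEc : ∀ b, b ≤ k → E k b = (b/2 : ℕ))
  (hEv : ∀ a b, a < k → b ≤ k → 0 ≤ E (a+1) b - E a b ∧ E (a+1) b - E a b ≤ 1)
  (hEh : ∀ a b, a ≤ k → b < k → 0 ≤ E a (b+1) - E a b ∧ E a (b+1) - E a b ≤ 1)

lemma Dx_core {a b : ℕ} (ha : a ≤ k) (hb : b ≤ k) : Dx k E a b = E a b := by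
  simp [Dx, ha, hb]

lemma Dx_transpose (a b : ℕ) : Dx k (fun x y => E y x) b a = Dx k E a b := by
  simp only [Dx]
  split_ifs <;> ring

include hE0 hE0' in
lemma Dx_bot (b : ℕ) (hb : b ≤ 2*k+1) : Dx k E 0 b = 0 := by
  simp only [Dx]
  split_ifs <;> simp [hE0, hE0'] <;> omega

include hE0 hE0' in
lemma Dx_left (a : ℕ) (ha : a ≤ 2*k+1) : Dx k E a 0 = 0 := by
  simp only [Dx]
  split_ifs <;> simp [hE0, hE0'] <;> omega

include hE0 hE0' in
lemma Dx_right (a : ℕ) (ha : a ≤ 2*k+1) : Dx k E a (2*k+1) = a := by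
  simp only [Dx]
  have h1 : 2*k+1 - (2*k+1) = 0 := by omega
  have h2 : ¬ (2*k+1 ≤ k) := by omega
  rcases le_or_gt a k with h | h
  · rw [if_pos h, if_neg h2, h1, hE0']; ring
  · rw [if_neg (by omega), if_neg h2, h1, hE0']; push_cast; ring

include hE0 hE0' in
lemma Dx_top (b : ℕ) (hb : b ≤ 2*k+1) : Dx k E (2*k+1) b = b := by
  have := Dx_right k (fun x y => E y x) (fun a => hE0' a) (fun b => hE0 b) b hb
  rw [← Dx_transpose k E (2*k+1) b]
  exact this

include hEc hEv in
lemma Dx_vdiff (a b : ℕ) (ha : a < 2*k+1) (hb : b ≤ 2*k+1) :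
    0 ≤ Dx k E (a+1) b - Dx k E a b ∧ Dx k E (a+1) b - Dx k E a b ≤ 1 := by
  simp only [Dx]
  rcases le_or_gt (a+1) k with h1 | h1 <;> rcases le_or_gt b k with h2 | h2
  · rw [if_pos h1, if_pos h2, if_pos (by omega), if_pos h2]
    exact hEv a b (by omega) h2
  · rw [if_pos h1, if_neg (by omega), if_pos (by omega), if_neg (by omega)]
    have := hEv a (2*k+1-b) (by omega) (by omega)
    push_cast
    omega
  · rcases le_or_gt a k with h3 | h3
    · have hak : a = k := by omega
      rw [if_neg (by omega), if_pos h2, if_pos h3, if_pos h2]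
      have h4 : 2*k+1-(a+1) = k := by omega
      rw [h4, hak, hEc b h2]
      omega
    · rw [if_neg (by omega), if_pos h2, if_neg (by omega), if_pos h2]
      have h5 : 2*k+1-(a+1) = 2*k-a := by omega
      have h6 : 2*k-a+1 = 2*k+1-a := by omega
      rw [h5]
      have := hEv (2*k-a) b (by omega) h2
      rw [h6] at this
      omega
  · rcases le_or_gt a k with h3 | h3
    · have hak : a = k := by omega
      rw [if_neg (by omega), if_neg (by omega), if_pos h3, if_neg (by omega)]
      have h4 : 2*k+1-(a+1) = k := by omega
      rw [h4, hak, hEc (2*k+1-b) (by omega)]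
      push_cast
      omega
    · rw [if_neg (by omega), if_neg (by omega), if_neg (by omega), if_neg (by omega)]
      have h5 : 2*k+1-(a+1) = 2*k-a := by omega
      have h6 : 2*k-a+1 = 2*k+1-a := by omega
      rw [h5]
      have := hEv (2*k-a) (2*k+1-b) (by omega) (by omega)
      rw [h6] at this
      push_cast
      omega

include hE0 hE0' hEr hEh in
lemma Dx_hdiff (a b : ℕ) (ha : a ≤ 2*k+1) (hb : b < 2*k+1) :
    0 ≤ Dx k E a (b+1) - Dx k E a b ∧ Dx k E a (b+1) - Dx k E a b ≤ 1 := by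
  have := Dx_vdiff k (fun x y => E y x)
    (fun a hak => hEr a hak)
    (fun a b h1 h2 => hEh b a h2 h1) b a hb ha
  rw [← Dx_transpose k E a (b+1), ← Dx_transpose k E a b]
  exact this

include hE0 hE0' in
lemma Dx_sym1 (a b : ℕ) (ha : a ≤ 2*k+1) (hb : b ≤ 2*k+1) :
    Dx k E a (2*k+1-b) = a - Dx k E a b := by
  simp only [Dx]
  have h6 : 2*k+1-(2*k+1-b) = b := by omega
  rcases le_or_gt b k with h2 | h2
  · have h5 : ¬ (2*k+1-b ≤ k) := by omega
    rcases le_or_gt a k with h3 | h3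
    · rw [if_pos h3, if_neg h5, if_pos h3, if_pos h2, h6]
    · rw [if_neg (by omega), if_neg h5, if_neg (by omega), if_pos h2, h6]
      omega
  · have h5 : 2*k+1-b ≤ k := by omega
    rcases le_or_gt a k with h3 | h3
    · rw [if_pos h3, if_pos h5, if_pos h3, if_neg (by omega)]
      omega
    · rw [if_neg (by omega), if_pos h5, if_neg (by omega), if_neg (by omega)]
      omega

include hE0 hE0' in
lemma Dx_sym2 (a b : ℕ) (ha : a ≤ 2*k+1) (hb : b ≤ 2*k+1) :
    Dx k E (2*k+1-a) b = b - Dx k E a b := by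
  have := Dx_sym1 k (fun x y => E y x) (fun a => hE0' a) (fun b => hE0 b) b a hb ha
  rw [← Dx_transpose k E (2*k+1-a) b, ← Dx_transpose k E a b]
  exact this

end core

section construct
variable (k : ℕ) (E : ℕ → ℕ → ℤ)

/-- The full matrix built from a core corner function. -/
noncomputable def Xmat : Fin (2*k+1) → Fin (2*k+1) → ℝ := fun i j =>
  ((Dx k E (i+1) (j+1) - Dx k E i (j+1) - Dx k E (i+1) j + Dx k E i j : ℤ) : ℝ)

variable (hE0 : ∀ b, E 0 b = 0) (hE0' : ∀ a, E a 0 = 0)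
  (hEr : ∀ a, a ≤ k → E a k = (a/2 : ℕ)) (hEc : ∀ b, b ≤ k → E k b = (b/2 : ℕ))
  (hEv : ∀ a b, a < k → b ≤ k → 0 ≤ E (a+1) b - E a b ∧ E (a+1) b - E a b ≤ 1)
  (hEh : ∀ a b, a ≤ k → b < k → 0 ≤ E a (b+1) - E a b ∧ E a (b+1) - E a b ≤ 1)

include hE0 hE0' in
lemma Xmat_row_prefix (i j : Fin (2*k+1)) :
    ∑ j' ∈ Finset.Iic j, Xmat k E i j'
      = ((Dx k E (i+1) (j+1) - Dx k E i (j+1) : ℤ) : ℝ) := by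
  have h1 : ∑ j' ∈ Finset.Iic j, Xmat k E i j'
      = ∑ m ∈ Finset.range (j.val+1),
          ((fun m => (((Dx k E (i+1) m - Dx k E i m : ℤ) : ℝ))) (m+1)
          - (fun m => (((Dx k E (i+1) m - Dx k E i m : ℤ) : ℝ))) m) := by
    rw [← sum_Iic_fin j]
    refine Finset.sum_congr rfl fun m _ => ?_
    simp only [Xmat]
    push_cast
    ring
  rw [h1, Finset.sum_range_sub (fun m => (((Dx k E (i+1) m - Dx k E i m : ℤ) : ℝ)))]
  rw [Dx_left k E hE0 hE0' (i+1) (by omega), Dx_left k E hE0 hE0' i (by omega)]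
  push_cast
  ring

include hE0 hE0' in
lemma Xmat_col_prefix (i j : Fin (2*k+1)) :
    ∑ i' ∈ Finset.Iic i, Xmat k E i' j
      = ((Dx k E (i+1) (j+1) - Dx k E (i+1) j : ℤ) : ℝ) := by
  have h1 : ∑ i' ∈ Finset.Iic i, Xmat k E i' j
      = ∑ m ∈ Finset.range (i.val+1),
          ((fun m => (((Dx k E m (j+1) - Dx k E m j : ℤ) : ℝ))) (m+1)
          - (fun m => (((Dx k E m (j+1) - Dx k E m j : ℤ) : ℝ))) m) := by
    rw [← sum_Iic_fin i]
    refine Finset.sum_congr rfl fun m _ => ?_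
    simp only [Xmat]
    push_cast
    ring
  rw [h1, Finset.sum_range_sub (fun m => (((Dx k E m (j+1) - Dx k E m j : ℤ) : ℝ)))]
  rw [Dx_bot k E hE0 hE0' (j+1) (by omega), Dx_bot k E hE0 hE0' j (by omega)]
  push_cast
  ring

include hE0 hE0' hEr hEc hEv hEh in
lemma Xmat_isASM : IsASM (2*k+1) (Xmat k E) := by
  refine ⟨?_, ?_, ?_, ?_, ?_⟩
  · intro i j
    have h1 := Dx_vdiff k E hEc hEv i (j+1) (by omega) (by omega)
    have h0 := Dx_vdiff k E hEc hEv i j (by omega) (by omega)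
    have : Dx k E (i+1) (j+1) - Dx k E i (j+1) - Dx k E (i+1) j + Dx k E i j = -1
        ∨ Dx k E (i+1) (j+1) - Dx k E i (j+1) - Dx k E (i+1) j + Dx k E i j = 0
        ∨ Dx k E (i+1) (j+1) - Dx k E i (j+1) - Dx k E (i+1) j + Dx k E i j = 1 := by
      omega
    simp only [Xmat]
    rcases this with h | h | h <;> rw [h] <;> norm_num
  · intro i j
    rw [Xmat_row_prefix k E hE0 hE0' i j]
    have h1 := Dx_vdiff k E hEc hEv i (j+1) (by omega) (by omega)
    have : Dx k E (i+1) (j+1) - Dx k E i (j+1) = 0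
        ∨ Dx k E (i+1) (j+1) - Dx k E i (j+1) = 1 := by omega
    rcases this with h | h <;> rw [h] <;> norm_num
  · intro i j
    rw [Xmat_col_prefix k E hE0 hE0' i j]
    have h1 := Dx_hdiff k E hE0 hE0' hEr hEh (i+1) j (by omega) (by omega)
    have : Dx k E (i+1) (j+1) - Dx k E (i+1) j = 0
        ∨ Dx k E (i+1) (j+1) - Dx k E (i+1) j = 1 := by omega
    rcases this with h | h <;> rw [h] <;> norm_num
  · intro i
    have h1 : ∑ j, Xmat k E i j = ∑ j' ∈ Finset.Iic (Fin.last (2*k)), Xmat k E i j' := by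
      congr 1
      ext x
      simp [Fin.le_last]
    rw [h1, Xmat_row_prefix k E hE0 hE0' i (Fin.last (2*k))]
    have h2 : (Fin.last (2*k) : ℕ) + 1 = 2*k+1 := by simp
    rw [h2, Dx_right k E hE0 hE0' (i+1) (by omega), Dx_right k E hE0 hE0' i (by omega)]
    push_cast
    ring
  · intro j
    have h1 : ∑ i, Xmat k E i j = ∑ i' ∈ Finset.Iic (Fin.last (2*k)), Xmat k E i' j := by
      congr 1
      ext x
      simp [Fin.le_last]
    rw [h1, Xmat_col_prefix k E hE0 hE0' (Fin.last (2*k)) j]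
    have h2 : (Fin.last (2*k) : ℕ) + 1 = 2*k+1 := by simp
    rw [h2, Dx_top k E hE0 hE0' (j+1) (by omega), Dx_top k E hE0 hE0' j (by omega)]
    push_cast
    ring

include hE0 hE0' in
lemma Xmat_symH (i j : Fin (2*k+1)) : Xmat k E i j = Xmat k E i j.rev := by
  have e2 : (j.rev : ℕ) = 2*k+1 - ((j:ℕ)+1) := by rw [Fin.val_rev]
  have e1 : (j.rev : ℕ) + 1 = 2*k+1 - (j:ℕ) := by rw [Fin.val_rev]; omega
  simp only [Xmat]
  rw [Int.cast_inj, e1, e2]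
  rw [Dx_sym1 k E hE0 hE0' (i+1) j (by omega) (by omega),
      Dx_sym1 k E hE0 hE0' (i:ℕ) j (by omega) (by omega),
      Dx_sym1 k E hE0 hE0' (i+1) ((j:ℕ)+1) (by omega) (by omega),
      Dx_sym1 k E hE0 hE0' (i:ℕ) ((j:ℕ)+1) (by omega) (by omega)]
  push_cast
  ring

include hE0 hE0' in
lemma Xmat_symV (i j : Fin (2*k+1)) : Xmat k E i j = Xmat k E i.rev j := by
  have e2 : (i.rev : ℕ) = 2*k+1 - ((i:ℕ)+1) := by rw [Fin.val_rev]
  have e1 : (i.rev : ℕ) + 1 = 2*k+1 - (i:ℕ) := by rw [Fin.val_rev]; omega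
  simp only [Xmat]
  rw [Int.cast_inj, e1, e2]
  rw [Dx_sym2 k E hE0 hE0' (i:ℕ) ((j:ℕ)+1) (by omega) (by omega),
      Dx_sym2 k E hE0 hE0' (i:ℕ) j (by omega) (by omega),
      Dx_sym2 k E hE0 hE0' ((i:ℕ)+1) ((j:ℕ)+1) (by omega) (by omega),
      Dx_sym2 k E hE0 hE0' ((i:ℕ)+1) j (by omega) (by omega)]
  push_cast
  ring

lemma Xmat_core (hc : k ≤ 2*k+1) (i j : Fin k) :
    Xmat k E (Fin.castLE hc i) (Fin.castLE hc j)
      = ((E ((i:ℕ)+1) ((j:ℕ)+1) - E (i:ℕ) ((j:ℕ)+1) - E ((i:ℕ)+1) (j:ℕ) + E (i:ℕ) (j:ℕ) : ℤ) : ℝ) := by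
  simp only [Xmat, Fin.coe_castLE]
  rw [Dx_core k E (by omega) (by omega), Dx_core k E (by omega) (by omega),
      Dx_core k E (by omega) (by omega), Dx_core k E (by omega) (by omega)]

end construct

section easy
variable {k : ℕ} (X : Fin (2*k+1) → Fin (2*k+1) → ℝ)

/-- `X` extended to `ℕ` indices by `0`. -/
noncomputable def xr : ℕ → ℕ → ℝ := fun a b =>
  if h : a < 2*k+1 ∧ b < 2*k+1 then X ⟨a,h.1⟩ ⟨b,h.2⟩ else 0

lemma xr_eq (i j : Fin (2*k+1)) : xr X i.val j.val = X i j := by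
  simp [xr, i.isLt, j.isLt]

lemma rowpre (hasm : IsASM (2*k+1) X) (i : Fin (2*k+1)) (b : ℕ) (hb1 : 1 ≤ b)
    (hb : b ≤ 2*k+1) :
    ∑ m ∈ Finset.range b, xr X i.val m = 0 ∨ ∑ m ∈ Finset.range b, xr X i.val m = 1 := by
  have h := hasm.2.1 i (⟨b-1, by omega⟩ : Fin (2*k+1))
  have he : ∑ j' ∈ Finset.Iic (⟨b-1, by omega⟩ : Fin (2*k+1)), X i j'
      = ∑ m ∈ Finset.range b, xr X i.val m := by
    rw [Finset.sum_congr rfl fun (j' : Fin (2*k+1)) _ => (xr_eq X i j').symm,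
      sum_Iic_fin (⟨b-1, by omega⟩ : Fin (2*k+1)) (fun m => xr X i.val m)]
    have hb' : b - 1 + 1 = b := by omega
    show ∑ x ∈ Finset.range (b-1+1), xr X (↑i) x = ∑ m ∈ Finset.range b, xr X (↑i) m
    rw [hb']
  rwa [he] at h

/-- full row sum in extended coordinates -/
lemma rowfull (hasm : IsASM (2*k+1) X) (i : Fin (2*k+1)) :
    ∑ m ∈ Finset.range (2*k+1), xr X i.val m = 1 := by
  have h := hasm.2.2.2.1 i
  rw [← Fin.sum_univ_eq_sum_range (fun m => xr X i.val m) (2*k+1)]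
  rw [Finset.sum_congr rfl fun (j : Fin (2*k+1)) _ => (xr_eq X i j)]
  exact h

/-- the reflection identity: `2 * (first k entries of row i) + center = 1`. -/
lemma row_reflect (hasm : IsASM (2*k+1) X) (hH : ∀ i j, X i j = X i j.rev)
    (i : Fin (2*k+1)) :
    2 * (∑ m ∈ Finset.range k, xr X i.val m) + xr X i.val k = 1 := by
  have hfull := rowfull X hasm i
  have hsplit : ∑ m ∈ Finset.range (2*k+1), xr X i.val m
      = (∑ m ∈ Finset.range (k+1), xr X i.val m)
        + ∑ m ∈ Finset.Ico (k+1) (2*k+1), xr X i.val m := by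
    rw [Finset.range_eq_Ico, ← Finset.sum_Ico_consecutive _
      (show 0 ≤ k+1 by omega) (show k+1 ≤ 2*k+1 by omega)]
    rw [Finset.range_eq_Ico]
  have htail : ∑ m ∈ Finset.Ico (k+1) (2*k+1), xr X i.val m
      = ∑ m ∈ Finset.range k, xr X i.val m := by
    refine Finset.sum_nbij' (fun m => 2*k-m) (fun m => 2*k-m) ?_ ?_ ?_ ?_ ?_
    · intro a ha; simp only [Finset.mem_Ico] at ha; simp only [Finset.mem_range]; omega
    · intro a ha; simp only [Finset.mem_range] at ha; simp only [Finset.mem_Ico]; omega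
    · intro a ha; simp only [Finset.mem_Ico] at ha; show 2*k - (2*k - a) = a; omega
    · intro a ha; simp only [Finset.mem_range] at ha; show 2*k - (2*k - a) = a; omega
    · intro a ha
      simp only [Finset.mem_Ico] at ha
      have h1 : a < 2*k+1 := by omega
      have h2 : 2*k-a < 2*k+1 := by omega
      have := hH i (⟨2*k-a, h2⟩ : Fin (2*k+1))
      rw [← xr_eq X i ⟨2*k-a, h2⟩, ← xr_eq X i ((⟨2*k-a, h2⟩ : Fin (2*k+1)).rev)] at this
      simp only [Fin.val_rev] at this
      have h3 : 2*k+1 - (2*k-a+1) = a := by omega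
      rw [h3] at this
      exact this.symm
  rw [hsplit, htail, Finset.sum_range_succ] at hfull
  linarith

lemma xr_transpose (a b : ℕ) : xr (fun i j => X j i) a b = xr X b a := by
  unfold xr
  by_cases h : a < 2*k+1 ∧ b < 2*k+1
  · rw [dif_pos h, dif_pos ⟨h.2, h.1⟩]
  · rw [dif_neg h, dif_neg (fun h' => h ⟨h'.2, h'.1⟩)]

lemma IsASM_transpose (hasm : IsASM (2*k+1) X) : IsASM (2*k+1) (fun i j => X j i) :=
  ⟨fun i j => hasm.1 j i, fun i j => hasm.2.2.1 j i, fun i j => hasm.2.1 j i,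
    hasm.2.2.2.2, hasm.2.2.2.1⟩

lemma rowpre' (hasm : IsASM (2*k+1) X) (a : ℕ) (ha : a < 2*k+1) (b : ℕ) (hb : b ≤ 2*k+1) :
    ∑ m ∈ Finset.range b, xr X a m = 0 ∨ ∑ m ∈ Finset.range b, xr X a m = 1 := by
  rcases Nat.eq_zero_or_pos b with hb0 | hb0
  · subst hb0; left; simp
  · exact rowpre X hasm ⟨a, ha⟩ b hb0 hb

lemma colpre' (hasm : IsASM (2*k+1) X) (b : ℕ) (hb : b ≤ 2*k+1) (a : ℕ) (ha : a < 2*k+1) :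
    ∑ m ∈ Finset.range b, xr X m a = 0 ∨ ∑ m ∈ Finset.range b, xr X m a = 1 := by
  have := rowpre' (fun i j => X j i) (IsASM_transpose X hasm) a ha b hb
  rwa [Finset.sum_congr rfl fun m _ => xr_transpose X a m] at this

lemma row_reflect' (hasm : IsASM (2*k+1) X) (hH : ∀ i j, X i j = X i j.rev)
    (a : ℕ) (ha : a < 2*k+1) :
    2 * (∑ m ∈ Finset.range k, xr X a m) + xr X a k = 1 :=
  row_reflect X hasm hH ⟨a, ha⟩

lemma center_col (hasm : IsASM (2*k+1) X) (hH : ∀ i j, X i j = X i j.rev) :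
    ∀ a, a < 2*k+1 →
      (∑ m ∈ Finset.range (a+1), xr X m k = if a % 2 = 0 then 1 else 0)
      ∧ (∑ m ∈ Finset.range k, xr X a m = if a % 2 = 1 then 1 else 0) := by
  intro a
  induction a with
  | zero =>
    intro ha
    have hrefl := row_reflect' X hasm hH 0 ha
    have hq : ∑ m ∈ Finset.range 1, xr X m k = xr X 0 k := by
      rw [Finset.sum_range_one]
    have hq1 := colpre' X hasm 1 (by omega) k (by omega)
    have hp : ∑ m ∈ Finset.range k, xr X 0 m = 0 ∨ ∑ m ∈ Finset.range k, xr X 0 m = 1 :=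
      rowpre' X hasm 0 ha k (by omega)
    rw [hq] at hq1
    constructor
    · rw [hq, if_pos (by omega : (0:ℕ) % 2 = 0)]
      rcases hq1 with h | h <;> rcases hp with h' | h' <;> linarith
    · rw [if_neg (by omega : ¬ ((0:ℕ) % 2 = 1))]
      rcases hq1 with h | h <;> rcases hp with h' | h' <;> linarith
  | succ a ih =>
    intro ha
    obtain ⟨hq1, hpa⟩ := ih (by omega)
    have e1 : ∑ m ∈ Finset.range (a+2), xr X m k
        = (∑ m ∈ Finset.range (a+1), xr X m k) + xr X (a+1) k := by
      rw [Finset.sum_range_succ]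
    have e2 := row_reflect' X hasm hH (a+1) ha
    have e3 := colpre' X hasm (a+2) (by omega) k (by omega)
    have e4 := rowpre' X hasm (a+1) ha k (by omega)
    rcases Nat.mod_two_eq_zero_or_one a with hpar | hpar
    · rw [if_pos hpar] at hq1
      constructor
      · rw [if_neg (by omega)]
        rcases e3 with h | h <;> rcases e4 with h' | h' <;> linarith
      · rw [if_pos (by omega)]
        rcases e3 with h | h <;> rcases e4 with h' | h' <;> linarith
    · rw [if_neg (by omega)] at hq1
      constructor
      · rw [if_pos (by omega)]
        rcases e3 with h | h <;> rcases e4 with h' | h' <;> linarith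
      · rw [if_neg (by omega)]
        rcases e3 with h | h <;> rcases e4 with h' | h' <;> linarith

lemma core_rowsum (hc : k ≤ 2*k+1) (hasm : IsASM (2*k+1) X)
    (hH : ∀ i j, X i j = X i j.rev) (i : Fin k) :
    ∑ j : Fin k, X (Fin.castLE hc i) (Fin.castLE hc j)
      = if (i:ℕ) % 2 = 1 then 1 else 0 := by
  have h1 : ∑ j : Fin k, X (Fin.castLE hc i) (Fin.castLE hc j)
      = ∑ j : Fin k, (fun m => xr X i.val m) (j : ℕ) := by
    refine Finset.sum_congr rfl fun j _ => ?_
    exact (xr_eq X (Fin.castLE hc i) (Fin.castLE hc j)).symm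
  rw [h1, Fin.sum_univ_eq_sum_range (fun m => xr X i.val m) k]
  exact (center_col X hasm hH i.val (by omega)).2

lemma core_prefix (hc : k ≤ 2*k+1) (hasm : IsASM (2*k+1) X) (i j : Fin k) :
    0 ≤ ∑ j' ∈ Finset.Iic j, X (Fin.castLE hc i) (Fin.castLE hc j')
    ∧ ∑ j' ∈ Finset.Iic j, X (Fin.castLE hc i) (Fin.castLE hc j') ≤ 1 := by
  have h1 : ∑ j' ∈ Finset.Iic j, X (Fin.castLE hc i) (Fin.castLE hc j')
      = ∑ m ∈ Finset.range (j.val+1), xr X i.val m := by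
    rw [← sum_Iic_fin j (fun m => xr X i.val m)]
    refine Finset.sum_congr rfl fun j' _ => ?_
    exact (xr_eq X (Fin.castLE hc i) (Fin.castLE hc j')).symm
  rw [h1]
  rcases rowpre' X hasm i.val (by omega) (j.val+1) (by omega) with h | h <;>
    rw [h] <;> norm_num

end easy

section hard
variable {k : ℕ} (Y : Fin k → Fin k → ℝ)

/-- `Y` extended to `ℕ` indices by `0`. -/
noncomputable def yext : ℕ → ℕ → ℝ := fun i j =>
  if h : i < k ∧ j < k then Y ⟨i,h.1⟩ ⟨j,h.2⟩ else 0

lemma yext_eq (i j : Fin k) : yext Y i.val j.val = Y i j := by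
  simp [yext, i.isLt, j.isLt]

/-- corner sums of `Y`. -/
noncomputable def Er : ℕ → ℕ → ℝ := fun a b =>
  ∑ i ∈ Finset.range a, ∑ j ∈ Finset.range b, yext Y i j

lemma Er_zc (a : ℕ) : Er Y a 0 = 0 := by simp [Er]

lemma Er_zr (b : ℕ) : Er Y 0 b = 0 := by simp [Er]

lemma Er_vdiff (a b : ℕ) :
    Er Y (a+1) b - Er Y a b = ∑ j ∈ Finset.range b, yext Y a j := by
  rw [Er, Er, Finset.sum_range_succ]
  ring

lemma yext_transpose (a b : ℕ) : yext (fun i j => Y j i) a b = yext Y b a := by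
  unfold yext
  by_cases h : a < k ∧ b < k
  · rw [dif_pos h, dif_pos ⟨h.2, h.1⟩]
  · rw [dif_neg h, dif_neg (fun h' => h ⟨h'.2, h'.1⟩)]

lemma Er_transpose (a b : ℕ) : Er (fun i j => Y j i) b a = Er Y a b := by
  rw [Er, Er, Finset.sum_comm]
  exact Finset.sum_congr rfl fun i _ => Finset.sum_congr rfl fun j _ => yext_transpose Y j i

variable
  (hY1 : ∀ i : Fin k, ∀ j : Fin k, (j : ℕ) + 1 < k →
      0 ≤ ∑ j' ∈ Finset.Iic j, Y i j' ∧ ∑ j' ∈ Finset.Iic j, Y i j' ≤ 1)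
  (hY3 : ∀ i : Fin k, (∑ j, Y i j) = if (i : ℕ) % 2 = 1 then 1 else 0)

include hY3 in
lemma Er_rowval (a : ℕ) (ha : a < k) :
    ∑ j ∈ Finset.range k, yext Y a j = if a % 2 = 1 then 1 else 0 := by
  have h1 : ∑ j ∈ Finset.range k, yext Y a j = ∑ j : Fin k, Y ⟨a, ha⟩ j := by
    rw [← Fin.sum_univ_eq_sum_range (fun m => yext Y a m) k]
    exact Finset.sum_congr rfl fun j _ => yext_eq Y ⟨a, ha⟩ j
  rw [h1, hY3 ⟨a, ha⟩]

include hY1 hY3 in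
lemma Er_vbound (a b : ℕ) (ha : a < k) (hb : b ≤ k) :
    0 ≤ Er Y (a+1) b - Er Y a b ∧ Er Y (a+1) b - Er Y a b ≤ 1 := by
  rw [Er_vdiff]
  rcases Nat.eq_zero_or_pos b with hb0 | hb0
  · subst hb0; simp
  rcases Nat.lt_or_ge b k with hbk | hbk
  · have h := hY1 ⟨a, ha⟩ ⟨b-1, by omega⟩ (by simp; omega)
    have he : ∑ j' ∈ Finset.Iic (⟨b-1, by omega⟩ : Fin k), Y ⟨a, ha⟩ j'
        = ∑ j ∈ Finset.range b, yext Y a j := by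
      rw [Finset.sum_congr rfl fun (j' : Fin k) _ => (yext_eq Y ⟨a, ha⟩ j').symm,
        sum_Iic_fin (⟨b-1, by omega⟩ : Fin k) (fun m => yext Y a m)]
      have hb' : b - 1 + 1 = b := by omega
      show ∑ x ∈ Finset.range (b-1+1), yext Y a x = ∑ m ∈ Finset.range b, yext Y a m
      rw [hb']
    rw [← he]
    exact h
  · have hbk' : b = k := by omega
    subst hbk'
    rw [Er_rowval Y hY3 a ha]
    split <;> norm_num

include hY1 hY3 in
lemma Er_rowfull : ∀ a, a ≤ k → Er Y a k = ((a/2 : ℕ) : ℝ) := by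
  intro a
  induction a with
  | zero => intro _; simp [Er_zr]
  | succ a ih =>
    intro ha
    have h1 : Er Y (a+1) k = Er Y a k + ∑ j ∈ Finset.range k, yext Y a j := by
      rw [← Er_vdiff]; ring
    rw [h1, ih (by omega), Er_rowval Y hY3 a (by omega)]
    rcases Nat.mod_two_eq_zero_or_one a with hpar | hpar
    · rw [if_neg (by omega)]
      have : (a+1)/2 = a/2 := by omega
      rw [this]
      ring
    · rw [if_pos hpar]
      have : (a+1)/2 = a/2 + 1 := by omega
      rw [this]
      push_cast
      ring

end hard

lemma decomp (F : Finset ℝ) (h0 : (0:ℝ) ∈ F) (h1 : (1:ℝ) ∈ F)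
    (hb : ∀ x ∈ F, 0 ≤ x ∧ x ≤ 1) :
    ∃ (m : ℕ) (g : ℕ → ℝ),
      (∀ l, l < m → 0 < (g l + g (l+1))/2 ∧ (g l + g (l+1))/2 < 1) ∧
      (∀ l, l < m → 0 ≤ g (l+1) - g l) ∧
      (∑ l ∈ Finset.range m, (g (l+1) - g l)) = 1 ∧
      (∀ x : ℝ, Int.fract x ∈ F →
        ∑ l ∈ Finset.range m, (g (l+1) - g l) * ((⌈x - (g l + g (l+1))/2⌉ : ℤ) : ℝ) = x) := by
  classical
  set M := F.card with hMdef
  have hM : 2 ≤ M := by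
    have : 1 < F.card := Finset.one_lt_card.mpr ⟨0, h0, 1, h1, by norm_num⟩
    omega
  set θ := F.orderIsoOfFin rfl with hθdef
  set g : ℕ → ℝ := fun l => if h : l < M then (θ ⟨l,h⟩ : ℝ) else 1 with hgdef
  have gmem : ∀ l, 0 ≤ g l ∧ g l ≤ 1 := by
    intro l
    simp only [hgdef]
    split
    · exact hb _ (θ _).2
    · norm_num
  have gmono_le : ∀ l l', l ≤ l' → l' < M → g l ≤ g l' := by
    intro l l' hll hl'
    simp only [hgdef, dif_pos hl', dif_pos (lt_of_le_of_lt hll hl')]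
    exact Subtype.coe_le_coe.mpr (θ.monotone (by exact hll))
  have gmono_lt : ∀ l l', l < l' → l' < M → g l < g l' := by
    intro l l' hll hl'
    simp only [hgdef, dif_pos hl', dif_pos (lt_trans hll hl')]
    exact Subtype.coe_lt_coe.mpr (θ.strictMono (by exact hll))
  have g0 : g 0 = 0 := by
    obtain ⟨i, hi⟩ := θ.surjective ⟨0, h0⟩
    have h2 : (θ ⟨0, by omega⟩ : ℝ) ≤ (θ i : ℝ) :=
      Subtype.coe_le_coe.mpr (θ.monotone (by simp [Fin.le_def]))
    rw [hi] at h2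
    have h3 := (gmem 0).1
    simp only [hgdef, dif_pos (show 0 < M by omega)] at h3 ⊢
    exact le_antisymm h2 h3
  have gtop : g (M-1) = 1 := by
    obtain ⟨i, hi⟩ := θ.surjective ⟨1, h1⟩
    have h2 : (θ i : ℝ) ≤ (θ ⟨M-1, by omega⟩ : ℝ) :=
      Subtype.coe_le_coe.mpr (θ.monotone (by
        simp only [Fin.le_def]
        omega))
    rw [hi] at h2
    have h3 := (gmem (M-1)).2
    simp only [hgdef, dif_pos (show M-1 < M by omega)] at h3 ⊢
    exact le_antisymm h3 h2
  refine ⟨M-1, g, ?_, ?_, ?_, ?_⟩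
  · intro l hl
    have h2 : g l < g (l+1) := gmono_lt l (l+1) (by omega) (by omega)
    have h3 := (gmem l).1
    have h4 := (gmem (l+1)).2
    constructor <;> nlinarith
  · intro l hl
    have h2 : g l < g (l+1) := gmono_lt l (l+1) (by omega) (by omega)
    linarith
  · rw [Finset.sum_range_sub g (M-1), g0, gtop]
    ring
  · intro x hx
    obtain ⟨i0, hi0⟩ := θ.surjective ⟨Int.fract x, hx⟩
    have hfi0 : g i0.val = Int.fract x := by
      simp only [hgdef, dif_pos i0.isLt]
      rw [dif_pos (show (i0:ℕ) < M from i0.isLt)]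
      rw [show (⟨i0.val, i0.isLt⟩ : Fin M) = i0 from rfl, hi0]
    have hfloor : (⌊x⌋ : ℝ) + Int.fract x = x := Int.floor_add_fract x
    have hf0 : 0 ≤ Int.fract x := Int.fract_nonneg x
    have hf1 : Int.fract x < 1 := Int.fract_lt_one x
    have hterm : ∀ l, l < M-1 →
        ((⌈x - (g l + g (l+1))/2⌉ : ℤ) : ℝ)
          = (⌊x⌋ : ℝ) + (if l < i0.val then 1 else 0) := by
      intro l hl
      have hgl0 := (gmem l).1
      have hgl1 := (gmem (l+1)).2
      have hmid : g l < (g l + g (l+1))/2 ∧ (g l + g (l+1))/2 < g (l+1) := by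
        have := gmono_lt l (l+1) (by omega) (by omega)
        constructor <;> linarith
      rcases Nat.lt_or_ge l i0.val with hlt | hge
      · have h5 : g (l+1) ≤ g i0.val := gmono_le (l+1) i0.val (by omega) i0.isLt
        rw [if_pos hlt]
        have : ⌈x - (g l + g (l+1))/2⌉ = ⌊x⌋ + 1 := by
          rw [Int.ceil_eq_iff]
          constructor
          · push_cast
            nlinarith [hmid.2, h5, hfi0 ▸ h5]
          · push_cast
            nlinarith [hmid.1]
        rw [this]
        push_cast
        ring
      · have h5 : g i0.val ≤ g l := gmono_le i0.val l hge (by omega)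
        rw [if_neg (by omega)]
        have : ⌈x - (g l + g (l+1))/2⌉ = ⌊x⌋ := by
          rw [Int.ceil_eq_iff]
          constructor
          · push_cast
            nlinarith [hmid.2]
          · push_cast
            nlinarith [hmid.1, h5]
        rw [this]
        push_cast
        ring
    have hsum : ∑ l ∈ Finset.range (M-1),
        (g (l+1) - g l) * ((⌈x - (g l + g (l+1))/2⌉ : ℤ) : ℝ)
        = ∑ l ∈ Finset.range (M-1),
            ((g (l+1) - g l) * (⌊x⌋ : ℝ) + (g (l+1) - g l) * (if l < i0.val then 1 else 0)) := by
      refine Finset.sum_congr rfl fun l hl => ?_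
      rw [hterm l (Finset.mem_range.mp hl)]
      ring
    rw [hsum, Finset.sum_add_distrib, ← Finset.sum_mul, Finset.sum_range_sub g (M-1), g0, gtop]
    have hind : ∑ l ∈ Finset.range (M-1), (g (l+1) - g l) * (if l < i0.val then 1 else 0)
        = ∑ l ∈ Finset.range i0.val, (g (l+1) - g l) := by
      rw [← Finset.sum_subset (Finset.range_subset_range.mpr (show i0.val ≤ M-1 by
            have := i0.isLt; omega))]
      · refine Finset.sum_congr rfl fun l hl => ?_
        rw [if_pos (Finset.mem_range.mp hl), mul_one]
      · intro l hl hnl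
        rw [if_neg (by simp only [Finset.mem_range] at hnl; omega), mul_zero]
    rw [hind, Finset.sum_range_sub g i0.val, g0, hfi0]
    linarith

section et
variable {k : ℕ} (Y : Fin k → Fin k → ℝ) (t : ℝ)

/-- integer rounding of the corner sums -/
noncomputable def Et : ℕ → ℕ → ℤ := fun a b => ⌈Er Y a b - t⌉

lemma ceil_neg_t (ht0 : 0 < t) (ht1 : t < 1) : ⌈-t⌉ = (0 : ℤ) := by
  have h1 : ⌈-t⌉ ≤ 0 := Int.ceil_le.2 (by push_cast; linarith)
  have h2 : (-1 : ℤ) < ⌈-t⌉ := Int.lt_ceil.2 (by push_cast; linarith)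
  omega

lemma ceil_intCast_sub (c : ℤ) (ht0 : 0 < t) (ht1 : t < 1) : ⌈(c:ℝ) - t⌉ = c := by
  rw [show (c:ℝ) - t = -t + c by ring, Int.ceil_add_intCast, ceil_neg_t t ht0 ht1]
  ring

variable (ht0 : 0 < t) (ht1 : t < 1)

include ht0 ht1 in
lemma Et_a0 (a : ℕ) : Et Y t a 0 = 0 := by
  rw [Et, Er_zc, zero_sub, ceil_neg_t t ht0 ht1]

include ht0 ht1 in
lemma Et_0b (b : ℕ) : Et Y t 0 b = 0 := by
  rw [Et, Er_zr, zero_sub, ceil_neg_t t ht0 ht1]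

variable
  (hY1 : ∀ i : Fin k, ∀ j : Fin k, (j : ℕ) + 1 < k →
      0 ≤ ∑ j' ∈ Finset.Iic j, Y i j' ∧ ∑ j' ∈ Finset.Iic j, Y i j' ≤ 1)
  (hY2 : ∀ i : Fin k, ∀ j : Fin k, (i : ℕ) + 1 < k →
      0 ≤ ∑ i' ∈ Finset.Iic i, Y i' j ∧ ∑ i' ∈ Finset.Iic i, Y i' j ≤ 1)
  (hY3 : ∀ i : Fin k, (∑ j, Y i j) = if (i : ℕ) % 2 = 1 then 1 else 0)
  (hY4 : ∀ j : Fin k, (∑ i, Y i j) = if (j : ℕ) % 2 = 1 then 1 else 0)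

include ht0 ht1 hY1 hY3 in
lemma Et_rk (a : ℕ) (ha : a ≤ k) : Et Y t a k = ((a/2 : ℕ) : ℤ) := by
  rw [Et, Er_rowfull Y hY1 hY3 a ha, show (((a/2 : ℕ) : ℝ)) = (((a/2 : ℕ) : ℤ) : ℝ) from
    (Int.cast_natCast _).symm, ceil_intCast_sub t _ ht0 ht1]

include ht0 ht1 hY2 hY4 in
lemma Et_kb (b : ℕ) (hb : b ≤ k) : Et Y t k b = ((b/2 : ℕ) : ℤ) := by
  have h1 : Er Y k b = Er (fun i j => Y j i) b k := (Er_transpose Y k b).symm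
  rw [Et, h1, Er_rowfull (fun i j => Y j i) (fun i j h => hY2 j i h) hY4 b hb,
    show (((b/2 : ℕ) : ℝ)) = (((b/2 : ℕ) : ℤ) : ℝ) from (Int.cast_natCast _).symm,
    ceil_intCast_sub t _ ht0 ht1]

include hY1 hY3 in
lemma Et_v (a b : ℕ) (ha : a < k) (hb : b ≤ k) :
    0 ≤ Et Y t (a+1) b - Et Y t a b ∧ Et Y t (a+1) b - Et Y t a b ≤ 1 := by
  obtain ⟨hd0, hd1⟩ := Er_vbound Y hY1 hY3 a b ha hb
  constructor
  · have : Er Y a b - t ≤ Er Y (a+1) b - t := by linarith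
    have := Int.ceil_le_ceil this
    simp only [Et]
    omega
  · have h2 : Er Y (a+1) b - t ≤ (Er Y a b - t) + (1:ℤ) := by push_cast; linarith
    have h3 := Int.ceil_le_ceil h2
    rw [Int.ceil_add_intCast] at h3
    simp only [Et]
    omega

include hY2 hY4 in
lemma Et_h (a b : ℕ) (ha : a ≤ k) (hb : b < k) :
    0 ≤ Et Y t a (b+1) - Et Y t a b ∧ Et Y t a (b+1) - Et Y t a b ≤ 1 := by
  have h1 : ∀ u v, Et Y t u v = Et (fun i j => Y j i) t v u := by
    intro u v
    rw [Et, Et, Er_transpose]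
  rw [h1 a (b+1), h1 a b]
  exact Et_v (fun i j => Y j i) t (fun i j h => hY2 j i h) hY4 b a hb ha

end et

theorem main (n k : ℕ) (hn : n = 2*k+1) (hc : k ≤ n) :
    convexHull ℝ
        ((fun (X : Fin n → Fin n → ℝ) (i j : Fin k) =>
            X (Fin.castLE hc i) (Fin.castLE hc j)) ''
          {X | IsASM n X ∧ (∀ i j, X i j = X i j.rev) ∧ (∀ i j, X i j = X i.rev j)})
      = {Y : Fin k → Fin k → ℝ |
          (∀ i : Fin k, ∀ j : Fin k, (j : ℕ) + 1 < k →
            0 ≤ ∑ j' ∈ Finset.Iic j, Y i j' ∧ ∑ j' ∈ Finset.Iic j, Y i j' ≤ 1) ∧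
          (∀ i : Fin k, ∀ j : Fin k, (i : ℕ) + 1 < k →
            0 ≤ ∑ i' ∈ Finset.Iic i, Y i' j ∧ ∑ i' ∈ Finset.Iic i, Y i' j ≤ 1) ∧
          (∀ i : Fin k, (∑ j, Y i j) = if (i : ℕ) % 2 = 1 then 1 else 0) ∧
          (∀ j : Fin k, (∑ i, Y i j) = if (j : ℕ) % 2 = 1 then 1 else 0)} := by
  subst hn
  apply Set.Subset.antisymm
  · -- easy direction
    refine convexHull_min ?_ ?_
    · rintro Y ⟨X, ⟨hasm, hH, hV⟩, rfl⟩
      refine ⟨?_, ?_, ?_, ?_⟩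
      · intro i j _
        exact core_prefix X hc hasm i j
      · intro i j _
        exact core_prefix (fun a b => X b a) hc (IsASM_transpose X hasm) j i
      · intro i
        exact core_rowsum X hc hasm hH i
      · intro j
        exact core_rowsum (fun a b => X b a) hc (IsASM_transpose X hasm)
          (fun a b => hV b a) j
    · -- convexity
      intro x hx y hy a b ha hb hab
      obtain ⟨hx1, hx2, hx3, hx4⟩ := hx
      obtain ⟨hy1, hy2, hy3, hy4⟩ := hy
      have hpt : ∀ i j : Fin k, (a • x + b • y) i j = a * x i j + b * y i j := by
        intro i j; simp
      refine ⟨?_, ?_, ?_, ?_⟩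
      · intro i j hj
        obtain ⟨u1, u2⟩ := hx1 i j hj
        obtain ⟨v1, v2⟩ := hy1 i j hj
        have he : ∑ j' ∈ Finset.Iic j, (a • x + b • y) i j'
            = a * (∑ j' ∈ Finset.Iic j, x i j') + b * (∑ j' ∈ Finset.Iic j, y i j') := by
          rw [Finset.sum_congr rfl fun j' _ => hpt i j', Finset.sum_add_distrib,
            ← Finset.mul_sum, ← Finset.mul_sum]
        rw [he]
        constructor <;> nlinarith
      · intro i j hi
        obtain ⟨u1, u2⟩ := hx2 i j hi
        obtain ⟨v1, v2⟩ := hy2 i j hi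
        have he : ∑ i' ∈ Finset.Iic i, (a • x + b • y) i' j
            = a * (∑ i' ∈ Finset.Iic i, x i' j) + b * (∑ i' ∈ Finset.Iic i, y i' j) := by
          rw [Finset.sum_congr rfl fun i' _ => hpt i' j, Finset.sum_add_distrib,
            ← Finset.mul_sum, ← Finset.mul_sum]
        rw [he]
        constructor <;> nlinarith
      · intro i
        have he : ∑ j, (a • x + b • y) i j
            = a * (∑ j, x i j) + b * (∑ j, y i j) := by
          rw [Finset.sum_congr rfl fun j _ => hpt i j, Finset.sum_add_distrib,
            ← Finset.mul_sum, ← Finset.mul_sum]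
        rw [he, hx3 i, hy3 i]
        split_ifs <;> linarith
      · intro j
        have he : ∑ i, (a • x + b • y) i j
            = a * (∑ i, x i j) + b * (∑ i, y i j) := by
          rw [Finset.sum_congr rfl fun i _ => hpt i j, Finset.sum_add_distrib,
            ← Finset.mul_sum, ← Finset.mul_sum]
        rw [he, hx4 j, hy4 j]
        split_ifs <;> linarith
  · -- hard direction
    intro Y hY
    obtain ⟨hY1, hY2, hY3, hY4⟩ := hY
    classical
    set F : Finset ℝ := insert 1 ((Finset.range (k+1) ×ˢ Finset.range (k+1)).image
        fun p => Int.fract (Er Y p.1 p.2)) with hFdef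
    have h0F : (0:ℝ) ∈ F := by
      apply Finset.mem_insert_of_mem
      apply Finset.mem_image.mpr
      refine ⟨(0,0), ?_, ?_⟩
      · simp
      · simp [Er_zr]
    have h1F : (1:ℝ) ∈ F := Finset.mem_insert_self 1 _
    have hbF : ∀ x ∈ F, 0 ≤ x ∧ x ≤ 1 := by
      intro x hx
      rcases Finset.mem_insert.mp hx with h | h
      · subst h; norm_num
      · obtain ⟨p, _, rfl⟩ := Finset.mem_image.mp h
        exact ⟨Int.fract_nonneg _, (Int.fract_lt_one _).le⟩
    have hfr : ∀ a b : ℕ, a ≤ k → b ≤ k → Int.fract (Er Y a b) ∈ F := by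
      intro a b ha hb
      apply Finset.mem_insert_of_mem
      apply Finset.mem_image.mpr
      refine ⟨(a,b), ?_, rfl⟩
      simp only [Finset.mem_product, Finset.mem_range]
      omega
    obtain ⟨m, g, hmid, hwnn, hwsum, hkey⟩ := decomp F h0F h1F hbF
    set t : ℕ → ℝ := fun l => (g l + g (l+1))/2 with htdef
    set w : ℕ → ℝ := fun l => g (l+1) - g l with hwdef
    -- the vertices
    have hZ : ∀ l ∈ Finset.range m,
        (fun (i j : Fin k) => Xmat k (Et Y (t l)) (Fin.castLE hc i) (Fin.castLE hc j))
          ∈ ((fun (X : Fin (2*k+1) → Fin (2*k+1) → ℝ) (i j : Fin k) =>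
            X (Fin.castLE hc i) (Fin.castLE hc j)) ''
          {X | IsASM (2*k+1) X ∧ (∀ i j, X i j = X i j.rev) ∧ (∀ i j, X i j = X i.rev j)}) := by
      intro l hl
      obtain ⟨ht0, ht1⟩ := hmid l (Finset.mem_range.mp hl)
      refine ⟨Xmat k (Et Y (t l)), ⟨?_, ?_, ?_⟩, rfl⟩
      · exact Xmat_isASM k (Et Y (t l))
          (Et_0b Y (t l) ht0 ht1) (Et_a0 Y (t l) ht0 ht1)
          (Et_rk Y (t l) ht0 ht1 hY1 hY3) (Et_kb Y (t l) ht0 ht1 hY2 hY4)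
          (Et_v Y (t l) hY1 hY3) (Et_h Y (t l) hY2 hY4)
      · exact Xmat_symH k (Et Y (t l)) (Et_0b Y (t l) ht0 ht1) (Et_a0 Y (t l) ht0 ht1)
      · exact Xmat_symV k (Et Y (t l)) (Et_0b Y (t l) ht0 ht1) (Et_a0 Y (t l) ht0 ht1)
    -- Y is the center of mass
    have hwsum' : ∑ l ∈ Finset.range m, w l = 1 := hwsum
    have hYeq : (Finset.range m).centerMass w
        (fun l => (fun (i j : Fin k) =>
          Xmat k (Et Y (t l)) (Fin.castLE hc i) (Fin.castLE hc j))) = Y := by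
      rw [Finset.centerMass_eq_of_sum_1 _ _ hwsum']
      funext i j
      have happ : (∑ l ∈ Finset.range m, w l • (fun (i j : Fin k) =>
          Xmat k (Et Y (t l)) (Fin.castLE hc i) (Fin.castLE hc j))) i j
          = ∑ l ∈ Finset.range m, w l * Xmat k (Et Y (t l)) (Fin.castLE hc i) (Fin.castLE hc j) := by
        rw [Finset.sum_apply, Finset.sum_apply]
        simp
      rw [happ]
      have hterm : ∀ l ∈ Finset.range m,
          w l * Xmat k (Et Y (t l)) (Fin.castLE hc i) (Fin.castLE hc j)
          = w l * ((⌈Er Y ((i:ℕ)+1) ((j:ℕ)+1) - t l⌉ : ℤ) : ℝ)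
            - w l * ((⌈Er Y (i:ℕ) ((j:ℕ)+1) - t l⌉ : ℤ) : ℝ)
            - w l * ((⌈Er Y ((i:ℕ)+1) (j:ℕ) - t l⌉ : ℤ) : ℝ)
            + w l * ((⌈Er Y (i:ℕ) (j:ℕ) - t l⌉ : ℤ) : ℝ) := by
        intro l hl
        rw [Xmat_core k (Et Y (t l)) hc i j]
        simp only [Et]
        push_cast
        ring
      rw [Finset.sum_congr rfl hterm, Finset.sum_add_distrib, Finset.sum_sub_distrib,
        Finset.sum_sub_distrib,
        hkey _ (hfr ((i:ℕ)+1) ((j:ℕ)+1) (by omega) (by omega)),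
        hkey _ (hfr (i:ℕ) ((j:ℕ)+1) (by omega) (by omega)),
        hkey _ (hfr ((i:ℕ)+1) (j:ℕ) (by omega) (by omega)),
        hkey _ (hfr (i:ℕ) (j:ℕ) (by omega) (by omega))]
      have hmix : Er Y ((i:ℕ)+1) ((j:ℕ)+1) - Er Y (i:ℕ) ((j:ℕ)+1)
          - Er Y ((i:ℕ)+1) (j:ℕ) + Er Y (i:ℕ) (j:ℕ) = yext Y i j := by
        have e1 := Er_vdiff Y (i:ℕ) ((j:ℕ)+1)
        have e2 := Er_vdiff Y (i:ℕ) (j:ℕ)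
        have e3 : ∑ j' ∈ Finset.range ((j:ℕ)+1), yext Y (i:ℕ) j'
            = (∑ j' ∈ Finset.range (j:ℕ), yext Y (i:ℕ) j') + yext Y (i:ℕ) (j:ℕ) := by
          rw [Finset.sum_range_succ]
        linarith
      rw [hmix, yext_eq]
    rw [← hYeq]
    exact Finset.centerMass_mem_convexHull _ (fun l hl => hwnn l (Finset.mem_range.mp hl))
      (by rw [hwsum']; norm_num) hZ

end VHS

/-- Linear description of the core polytope of vertically and horizontally
symmetric ASMs: the convex hull of the upper-left `⌊n/2⌋ × ⌊n/2⌋` blocks of VHSASMs. -/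
theorem VHSASM_core_polytope (n : ℕ) (hn : 1 ≤ n) (hodd : Odd n) :
    convexHull ℝ
        ((fun (X : Fin n → Fin n → ℝ) (i j : Fin (n / 2)) =>
            X (Fin.castLE (Nat.div_le_self n 2) i) (Fin.castLE (Nat.div_le_self n 2) j)) ''
          {X | IsASM n X ∧ (∀ i j, X i j = X i j.rev) ∧ (∀ i j, X i j = X i.rev j)})
      = {Y : Fin (n / 2) → Fin (n / 2) → ℝ |
          (∀ i : Fin (n / 2), ∀ j : Fin (n / 2), (j : ℕ) + 1 < n / 2 →
            0 ≤ ∑ j' ∈ Finset.Iic j, Y i j' ∧ ∑ j' ∈ Finset.Iic j, Y i j' ≤ 1) ∧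
          (∀ i : Fin (n / 2), ∀ j : Fin (n / 2), (i : ℕ) + 1 < n / 2 →
            0 ≤ ∑ i' ∈ Finset.Iic i, Y i' j ∧ ∑ i' ∈ Finset.Iic i, Y i' j ≤ 1) ∧
          (∀ i : Fin (n / 2), (∑ j, Y i j) = if (i : ℕ) % 2 = 1 then 1 else 0) ∧
          (∀ j : Fin (n / 2), (∑ i, Y i j) = if (j : ℕ) % 2 = 1 then 1 else 0)} := by
  have h2 : n = 2*(n/2)+1 := by
    obtain ⟨m, hm⟩ := hodd
    omega
  exact VHS.main n (n/2) h2 (Nat.div_le_self n 2)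
end
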